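/- arXiv:1607.01658 — 2 statements merged into one kernel-verified Lean document; each statement's English description precedes it below -/
import Mathlib

section
/- Let λ₋ = θ₀. Then λ₋ ∈ (0,1) and there exists a constant C > 0 such that: for every sign sequence ε : ℕ → {−1,+1}, every sequence (v_k)_{k≥0} with v_k ∈ [−θ₀, θ₀] and v_k = T_{ε_k}(v_{k+1}) for all k ≥ 0, and every n ≥ 1, the Euclidean norm of the vector (A_{ε_{n−1}} · A_{ε_{n−2}} · ⋯ · A_{ε_0})·(1, v₀)ᵀ is at most C · λ₋ⁿ · ‖(1, v₀)‖. -/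
noncomputable section

/-- `θ₀ = α − √(α² + 2α − 2)`. -/
def theta0 (α : ℝ) : ℝ := α - Real.sqrt (α ^ 2 + 2 * α - 2)

/-- The Möbius map `T_ε(v) = 2(1−α)/(−2α + εv)` acting on stable directions. -/
def Tmap (α ε v : ℝ) : ℝ := 2 * (1 - α) / (-2 * α + ε * v)

/-- The derivative matrix `A_ε` of `G` on the region with sign `ε`:
rows `(0, 1)` and `(2ε(1−α), 2εα)`. -/
def Amat (α ε : ℝ) : Matrix (Fin 2) (Fin 2) ℝ := !![0, 1; 2 * ε * (1 - α), 2 * ε * α]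

/-- `Aprod α ε n = A_{ε(n−1)} · A_{ε(n−2)} · ⋯ · A_{ε 0}`. -/
def Aprod (α : ℝ) (ε : ℕ → ℝ) : ℕ → Matrix (Fin 2) (Fin 2) ℝ
  | 0 => 1
  | n + 1 => Amat α (ε n) * Aprod α ε n

/-- Euclidean norm of a vector in `ℝ²`. -/
def eNorm (x : Fin 2 → ℝ) : ℝ := Real.sqrt (x 0 ^ 2 + x 1 ^ 2)

lemma eNorm_smul (c : ℝ) (x : Fin 2 → ℝ) : eNorm (c • x) = |c| * eNorm x := by
  simp only [eNorm, Pi.smul_apply, smul_eq_mul]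
  rw [show (c * x 0) ^ 2 + (c * x 1) ^ 2 = c ^ 2 * (x 0 ^ 2 + x 1 ^ 2) by ring,
    Real.sqrt_mul (sq_nonneg c), Real.sqrt_sq_eq_abs]

/-- with `λ₋ = θ₀` one has `λ₋ ∈ (0,1)`, and there is `C > 0` such that for
every sign sequence `ε`, every backward-invariant sequence `(v_k) ⊆ [−θ₀,θ₀]` with
`v_k = T_{ε_k}(v_{k+1})`, and every `n ≥ 1`,
`‖A_{ε_{n−1}}⋯A_{ε_0}·(1, v₀)ᵀ‖ ≤ C·λ₋ⁿ·‖(1, v₀)‖`. -/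
theorem statement4 (α : ℝ) (hα : α ∈ Set.Ioo (3/4 : ℝ) 1) :
    (0 < theta0 α ∧ theta0 α < 1) ∧
    ∃ C > (0 : ℝ), ∀ ε : ℕ → ℝ, (∀ k, ε k = 1 ∨ ε k = -1) →
      ∀ v : ℕ → ℝ, (∀ k, v k ∈ Set.Icc (-(theta0 α)) (theta0 α)) →
        (∀ k, v k = Tmap α (ε k) (v (k + 1))) →
        ∀ n : ℕ, 1 ≤ n →
          eNorm ((Aprod α ε n).mulVec ![1, v 0]) ≤ C * theta0 α ^ n * eNorm ![1, v 0] := by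
  obtain ⟨hα1, hα2⟩ := hα
  have hd : (0:ℝ) < α ^ 2 + 2 * α - 2 := by nlinarith
  have hsq : Real.sqrt (α ^ 2 + 2 * α - 2) < α := by
    rw [Real.sqrt_lt' (by linarith)]; nlinarith
  have hθpos : 0 < theta0 α := by
    simp only [theta0]; linarith
  have hθlt : theta0 α < 1 := by
    have := Real.sqrt_nonneg (α ^ 2 + 2 * α - 2)
    simp only [theta0]; linarith
  refine ⟨⟨hθpos, hθlt⟩, Real.sqrt 2, by positivity, ?_⟩
  intro ε hε v hv hT n hn
  -- key step identity
  have key : ∀ k, (Amat α (ε k)).mulVec ![1, v k] = (v k) • ![1, v (k+1)] := by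
    intro k
    have hε2 : ε k ^ 2 = 1 := by rcases hε k with h | h <;> rw [h] <;> norm_num
    have hεabs : |ε k| = 1 := by rcases hε k with h | h <;> rw [h] <;> norm_num
    have hv1 : |v (k+1)| ≤ theta0 α := abs_le.mpr ⟨(hv (k+1)).1, (hv (k+1)).2⟩
    have hden : -2 * α + ε k * v (k+1) ≠ 0 := by
      have : |ε k * v (k+1)| ≤ theta0 α := by
        rw [abs_mul, hεabs, one_mul]; exact hv1
      have := abs_le.mp this
      have h2α : (3:ℝ)/2 < 2 * α := by linarith
      intro h; nlinarith
    have hden' : -(2*α) + ε k * v (k+1) ≠ 0 := by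
      rw [show -(2*α) = -2*α by ring]; exact hden
    have heq : v k * (-2 * α + ε k * v (k+1)) = 2 * (1 - α) := by
      rw [hT k, Tmap]; field_simp
    have h2 : 2 * ε k * (1 - α) * 1 + 2 * ε k * α * v k = v k * v (k+1) := by
      linear_combination (-(ε k)) * heq + (v k * v (k+1)) * hε2
    funext i
    fin_cases i <;>
      simp [Amat, Matrix.mulVec, dotProduct, Fin.sum_univ_two] <;>
      linarith [h2]
  have prodlem : ∀ n, (Aprod α ε n).mulVec ![1, v 0]
      = (∏ k ∈ Finset.range n, v k) • ![1, v n] := by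
    intro n
    induction n with
    | zero => simp [Aprod]
    | succ m ih =>
      rw [show Aprod α ε (m+1) = Amat α (ε m) * Aprod α ε m from rfl,
        ← Matrix.mulVec_mulVec, ih, Matrix.mulVec_smul, key m,
        Finset.prod_range_succ, smul_smul, mul_comm]
  rw [prodlem n, eNorm_smul]
  have habs : |∏ k ∈ Finset.range n, v k| ≤ theta0 α ^ n := by
    rw [Finset.abs_prod]
    calc ∏ k ∈ Finset.range n, |v k| ≤ ∏ k ∈ Finset.range n, theta0 α :=
          Finset.prod_le_prod (fun _ _ => abs_nonneg _)
            (fun k _ => abs_le.mpr ⟨(hv k).1, (hv k).2⟩)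
      _ = theta0 α ^ n := by rw [Finset.prod_const, Finset.card_range]
  have hnormn : eNorm ![1, v n] ≤ Real.sqrt 2 := by
    have hvn : |v n| ≤ theta0 α := abs_le.mpr ⟨(hv n).1, (hv n).2⟩
    have : (v n) ^ 2 ≤ 1 := by nlinarith [abs_nonneg (v n), sq_abs (v n)]
    simp only [eNorm, Matrix.cons_val_zero, Matrix.cons_val_one, Matrix.head_cons]
    exact Real.sqrt_le_sqrt (by nlinarith)
  have hnorm0 : 1 ≤ eNorm ![1, v 0] := by
    simp only [eNorm, Matrix.cons_val_zero, Matrix.cons_val_one, Matrix.head_cons]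
    nlinarith [Real.sq_sqrt (show (0:ℝ) ≤ (1:ℝ)^2 + v 0 ^ 2 by positivity),
      Real.sqrt_nonneg ((1:ℝ)^2 + v 0 ^ 2), sq_nonneg (v 0),
      sq_nonneg (Real.sqrt ((1:ℝ)^2 + v 0 ^ 2) - 1)]
  calc |∏ k ∈ Finset.range n, v k| * eNorm ![1, v n]
      ≤ theta0 α ^ n * Real.sqrt 2 := by
        apply mul_le_mul habs hnormn (by
          simp only [eNorm]; positivity) (by positivity)
    _ = Real.sqrt 2 * theta0 α ^ n * 1 := by ring
    _ ≤ Real.sqrt 2 * theta0 α ^ n * eNorm ![1, v 0] := by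
        apply mul_le_mul_of_nonneg_left hnorm0 (by positivity)
end
end

section
/- There exists a constant d ≥ 1, depending only on α, with the following property: for every n ≥ 1, every pair of sign sequences ε, ε′ : ℕ → {−1,+1} with ε_k = ε′_k for 0 ≤ k ≤ n−1, and every pair of sequences (v_k)_{k≥0}, (v′_k)_{k≥0} in [−θ₀, θ₀] satisfying v_k = T_{ε_k}(v_{k+1}) and v′_k = T_{ε′_k}(v′_{k+1}) for all k ≥ 0, one has (1/d)·∏_{k=0}^{n−1} |v′_k| ≤ ∏_{k=0}^{n−1} |v_k| ≤ d·∏_{k=0}^{n−1} |v′_k|. -/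
noncomputable section

/-!
Both `v` and `v'` are backward orbits of the same maps `T_{ε_k}`, `k < n`, so contraction gives
`|v_k - v'_k| ≤ 2θ₀ κ^(n-k)`. As `|v'_k| ≥ m := 2(1-α)/(2α+θ₀)`, each factor obeys
`|v_k| ≤ |v'_k| exp(|v_k - v'_k| / m)`, and the geometric series bounds the total distortion by
`exp(2θ₀ κ / (m (1-κ)))`, independently of `n`.
-/

open Finset

theorem le_pow_mul_of_le_mul_succ {R : Type*} [Semiring R] [PartialOrder R] [IsOrderedRing R]
    {a : ℕ → R} {κ : R} {n : ℕ} (hκ : 0 ≤ κ)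
    (h : ∀ k < n, a k ≤ κ * a (k + 1)) {k : ℕ} (hk : k ≤ n) : a k ≤ κ ^ (n - k) * a n := by
  induction hk using Nat.decreasingInduction with
  | self => simp
  | of_succ k hkn ih =>
    calc a k ≤ κ * a (k + 1) := h k hkn
      _ ≤ κ * (κ ^ (n - (k + 1)) * a n) := by gcongr
      _ = κ ^ (n - k) * a n := by
        rw [← mul_assoc, ← pow_succ', Nat.sub_add_eq, Nat.sub_add_cancel (by omega)]

theorem sum_range_pow_sub_le {κ : ℝ} (h0 : 0 ≤ κ) (h1 : κ < 1) (n : ℕ) :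
    ∑ k ∈ range n, κ ^ (n - k) ≤ κ / (1 - κ) := by
  have hreflect : ∑ k ∈ range n, κ ^ (n - k) = ∑ i ∈ Ico 1 (n + 1), κ ^ i := by
    rw [sum_Ico_eq_sum_range, ← sum_range_reflect]
    refine sum_congr rfl fun k hk => ?_
    rw [mem_range] at hk
    congr 1
    omega
  simpa [hreflect] using geom_sum_Ico_le_of_lt_one (m := 1) (n := n + 1) h0 h1

theorem prod_abs_le_exp_mul_prod_abs {ι : Type*} (s : Finset ι) (x y : ι → ℝ) {m : ℝ}
    (hm : 0 < m) (hy : ∀ i ∈ s, m ≤ |y i|) :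
    ∏ i ∈ s, |x i| ≤ Real.exp (∑ i ∈ s, |x i - y i| / m) * ∏ i ∈ s, |y i| := by
  rw [Real.exp_sum, ← prod_mul_distrib]
  refine prod_le_prod (fun i _ => abs_nonneg _) fun i hi => ?_
  calc |x i| ≤ |y i| + |x i - y i| := by linarith [abs_sub_abs_le_abs_sub (x i) (y i)]
    _ ≤ |y i| + |x i - y i| * (|y i| / m) := by
        gcongr
        exact le_mul_of_one_le_right (abs_nonneg _) ((one_le_div hm).2 (hy i hi))
    _ = (|x i - y i| / m + 1) * |y i| := by ring
    _ ≤ Real.exp (|x i - y i| / m) * |y i| := by gcongr; exact Real.add_one_le_exp _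

section Tmap

variable {α : ℝ}

theorem sqrt_disc_mem_Ioo (hα : α ∈ Set.Ioo (3/4 : ℝ) 1) :
    Real.sqrt (α ^ 2 + 2 * α - 2) ∈ Set.Ioo 0 α := by
  obtain ⟨h34, h1⟩ := hα
  refine ⟨Real.sqrt_pos.2 (by nlinarith), ?_⟩
  rw [Real.sqrt_lt' (by linarith)]
  linarith

theorem theta0_pos (hα : α ∈ Set.Ioo (3/4 : ℝ) 1) : 0 < theta0 α := by
  have := (sqrt_disc_mem_Ioo hα).2
  unfold theta0
  linarith

theorem theta0_lt_self (hα : α ∈ Set.Ioo (3/4 : ℝ) 1) : theta0 α < α := by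
  have := (sqrt_disc_mem_Ioo hα).1
  unfold theta0
  linarith

theorem theta0_mul_two_mul_sub_theta0 (hα : α ∈ Set.Ioo (3/4 : ℝ) 1) :
    theta0 α * (2 * α - theta0 α) = 2 * (1 - α) := by
  have hsq := Real.sq_sqrt (by nlinarith [hα.1] : 0 ≤ α ^ 2 + 2 * α - 2)
  unfold theta0
  nlinarith

-- With `s = √(α² + 2α − 2)` this is the contraction ratio `(α − s)/(α + s)`.
def kappa (α : ℝ) : ℝ := theta0 α / (2 * α - theta0 α)

theorem kappa_nonneg (hα : α ∈ Set.Ioo (3/4 : ℝ) 1) : 0 ≤ kappa α :=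
  div_nonneg (theta0_pos hα).le (by linarith [theta0_lt_self hα, theta0_pos hα])

theorem kappa_lt_one (hα : α ∈ Set.Ioo (3/4 : ℝ) 1) : kappa α < 1 := by
  have := theta0_lt_self hα
  rw [kappa, div_lt_one (by linarith [theta0_pos hα])]
  linarith

theorem two_mul_one_sub_div_sq_eq_kappa (hα : α ∈ Set.Ioo (3/4 : ℝ) 1) :
    2 * (1 - α) / (2 * α - theta0 α) ^ 2 = kappa α := by
  have : 2 * α - theta0 α ≠ 0 := by linarith [theta0_lt_self hα, theta0_pos hα]
  rw [← theta0_mul_two_mul_sub_theta0 hα, kappa]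
  field_simp

theorem Tmap_denom_mem_Icc {ε v : ℝ} (hε : |ε| ≤ 1)
    (hv : |v| ≤ theta0 α) :
    -2 * α + ε * v ∈ Set.Icc (-(2 * α + theta0 α)) (-(2 * α - theta0 α)) := by
  have hεv : |ε * v| ≤ theta0 α := by
    rw [abs_mul]
    nlinarith [abs_nonneg ε, abs_nonneg v]
  obtain ⟨h1, h2⟩ := abs_le.1 hεv
  constructor <;> linarith

theorem abs_Tmap_sub_Tmap_le (hα : α ∈ Set.Ioo (3/4 : ℝ) 1) {ε v w : ℝ} (hε : |ε| ≤ 1)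
    (hv : |v| ≤ theta0 α) (hw : |w| ≤ theta0 α) :
    |Tmap α ε v - Tmap α ε w| ≤ kappa α * |v - w| := by
  set c := 2 * α - theta0 α
  have hc : 0 < c := by linarith [theta0_lt_self hα, theta0_pos hα]
  have ha := (Tmap_denom_mem_Icc hε hv).2
  have hb := (Tmap_denom_mem_Icc hε hw).2
  have hab : c ^ 2 ≤ (-2 * α + ε * v) * (-2 * α + ε * w) := by nlinarith
  have hdiff : Tmap α ε v - Tmap α ε w
      = 2 * (1 - α) * (ε * (w - v)) / ((-2 * α + ε * v) * (-2 * α + ε * w)) := by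
    unfold Tmap
    rw [div_sub_div _ _ (by linarith) (by linarith)]
    ring
  have hα1 : 0 < 2 * (1 - α) := by linarith [hα.2]
  have hεwv : |ε * (w - v)| ≤ |v - w| := by
    rw [abs_mul, abs_sub_comm]
    exact mul_le_of_le_one_left (abs_nonneg _) hε
  calc |Tmap α ε v - Tmap α ε w|
      = 2 * (1 - α) * |ε * (w - v)| / ((-2 * α + ε * v) * (-2 * α + ε * w)) := by
        rw [hdiff, abs_div, abs_mul (2 * (1 - α)), abs_of_pos hα1,
          abs_of_pos ((pow_pos hc 2).trans_le hab)]
    _ ≤ 2 * (1 - α) * |v - w| / c ^ 2 := by gcongr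
    _ = kappa α * |v - w| := by rw [← two_mul_one_sub_div_sq_eq_kappa hα]; ring

def tmapLowerBound (α : ℝ) : ℝ := 2 * (1 - α) / (2 * α + theta0 α)

theorem tmapLowerBound_pos (hα : α ∈ Set.Ioo (3/4 : ℝ) 1) : 0 < tmapLowerBound α :=
  div_pos (by linarith [hα.2]) (by linarith [hα.1, theta0_pos hα])

theorem tmapLowerBound_le_abs_Tmap (hα : α ∈ Set.Ioo (3/4 : ℝ) 1) {ε w : ℝ} (hε : |ε| ≤ 1)
    (hw : |w| ≤ theta0 α) : tmapLowerBound α ≤ |Tmap α ε w| := by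
  obtain ⟨hlo, hhi⟩ := Tmap_denom_mem_Icc hε hw
  have hθ := theta0_pos hα
  have hθα := theta0_lt_self hα
  have hden : |-2 * α + ε * w| ≤ 2 * α + theta0 α := abs_le.2 ⟨hlo, by linarith⟩
  have hpos : 0 < |-2 * α + ε * w| := abs_pos.2 (by linarith)
  have hα1 : 0 < 2 * (1 - α) := by linarith [hα.2]
  rw [Tmap, tmapLowerBound, abs_div, abs_of_pos hα1]
  gcongr

def distortion (α : ℝ) : ℝ :=
  Real.exp (kappa α / (1 - kappa α) * (2 * theta0 α / tmapLowerBound α))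

theorem one_le_distortion (hα : α ∈ Set.Ioo (3/4 : ℝ) 1) : 1 ≤ distortion α := by
  have := kappa_nonneg hα
  have := kappa_lt_one hα
  have := tmapLowerBound_pos hα
  have := theta0_pos hα
  exact Real.one_le_exp (by positivity)

theorem abs_sub_le_kappa_pow_mul (hα : α ∈ Set.Ioo (3/4 : ℝ) 1) {n : ℕ}
    {ε v v' : ℕ → ℝ} (hε : ∀ k < n, |ε k| ≤ 1)
    (hv : ∀ k ≤ n, |v k| ≤ theta0 α) (hv' : ∀ k ≤ n, |v' k| ≤ theta0 α)
    (hrec : ∀ k < n, v k = Tmap α (ε k) (v (k + 1)))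
    (hrec' : ∀ k < n, v' k = Tmap α (ε k) (v' (k + 1))) {k : ℕ} (hk : k ≤ n) :
    |v k - v' k| ≤ kappa α ^ (n - k) * (2 * theta0 α) := by
  have hcontract : ∀ j < n, |v j - v' j| ≤ kappa α * |v (j + 1) - v' (j + 1)| := fun j hj => by
    rw [hrec j hj, hrec' j hj]
    exact abs_Tmap_sub_Tmap_le hα (hε j hj) (hv _ hj) (hv' _ hj)
  have hend : |v n - v' n| ≤ 2 * theta0 α := by
    linarith [abs_sub (v n) (v' n), hv n le_rfl, hv' n le_rfl]
  calc |v k - v' k| ≤ kappa α ^ (n - k) * |v n - v' n| :=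
        le_pow_mul_of_le_mul_succ (a := fun j => |v j - v' j|) (kappa_nonneg hα) hcontract hk
    _ ≤ kappa α ^ (n - k) * (2 * theta0 α) := by have := kappa_nonneg hα; gcongr

theorem prod_abs_le_distortion_mul_prod_abs (hα : α ∈ Set.Ioo (3/4 : ℝ) 1) {n : ℕ}
    {ε v v' : ℕ → ℝ} (hε : ∀ k < n, |ε k| ≤ 1)
    (hv : ∀ k ≤ n, |v k| ≤ theta0 α) (hv' : ∀ k ≤ n, |v' k| ≤ theta0 α)
    (hrec : ∀ k < n, v k = Tmap α (ε k) (v (k + 1)))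
    (hrec' : ∀ k < n, v' k = Tmap α (ε k) (v' (k + 1))) :
    ∏ k ∈ range n, |v k| ≤ distortion α * ∏ k ∈ range n, |v' k| := by
  set κ := kappa α
  set m := tmapLowerBound α
  have hm := tmapLowerBound_pos hα
  have hlow : ∀ k ∈ range n, m ≤ |v' k| := fun k hk => by
    rw [mem_range] at hk
    rw [hrec' k hk]
    exact tmapLowerBound_le_abs_Tmap hα (hε k hk) (hv' _ hk)
  have hsum : ∑ k ∈ range n, |v k - v' k| / m ≤ κ / (1 - κ) * (2 * theta0 α / m) :=
    calc ∑ k ∈ range n, |v k - v' k| / m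
        ≤ ∑ k ∈ range n, κ ^ (n - k) * (2 * theta0 α / m) := by
          refine sum_le_sum fun k hk => ?_
          rw [← mul_div_assoc]
          gcongr
          exact abs_sub_le_kappa_pow_mul hα hε hv hv' hrec hrec' (mem_range.1 hk).le
      _ = (∑ k ∈ range n, κ ^ (n - k)) * (2 * theta0 α / m) := (sum_mul ..).symm
      _ ≤ κ / (1 - κ) * (2 * theta0 α / m) := by
          have := theta0_pos hα
          gcongr
          exact sum_range_pow_sub_le (kappa_nonneg hα) (kappa_lt_one hα) n
  calc ∏ k ∈ range n, |v k|
      ≤ Real.exp (∑ k ∈ range n, |v k - v' k| / m) * ∏ k ∈ range n, |v' k| :=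
        prod_abs_le_exp_mul_prod_abs _ v v' hm hlow
    _ ≤ distortion α * ∏ k ∈ range n, |v' k| := by
        gcongr
        exact Real.exp_le_exp.2 hsum

end Tmap

/-- there is a constant `d ≥ 1`, depending only on `α`, such that for
every `n ≥ 1`, every pair of sign sequences agreeing in positions `0,…,n−1`, and every pair
of corresponding backward-invariant sequences `(v_k)`, `(v′_k)` in `[−θ₀, θ₀]`, one has
`(1/d)·∏_{k<n} |v′_k| ≤ ∏_{k<n} |v_k| ≤ d·∏_{k<n} |v′_k|`. -/
theorem statement16 (α : ℝ) (hα : α ∈ Set.Ioo (3/4 : ℝ) 1) :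
    ∃ d : ℝ, 1 ≤ d ∧
      ∀ n : ℕ, 1 ≤ n →
      ∀ ε ε' : ℕ → ℝ, (∀ k, ε k = 1 ∨ ε k = -1) → (∀ k, ε' k = 1 ∨ ε' k = -1) →
      (∀ k < n, ε k = ε' k) →
      ∀ v v' : ℕ → ℝ,
      (∀ k, v k ∈ Set.Icc (-(theta0 α)) (theta0 α)) →
      (∀ k, v' k ∈ Set.Icc (-(theta0 α)) (theta0 α)) →
      (∀ k, v k = Tmap α (ε k) (v (k + 1))) →
      (∀ k, v' k = Tmap α (ε' k) (v' (k + 1))) →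
      (1 / d) * ∏ k ∈ Finset.range n, |v' k| ≤ ∏ k ∈ Finset.range n, |v k| ∧
      ∏ k ∈ Finset.range n, |v k| ≤ d * ∏ k ∈ Finset.range n, |v' k| := by
  refine ⟨distortion α, one_le_distortion hα, ?_⟩
  intro n _ ε ε' hε _ hεε' v v' hv hv' hrec hrec'
  have hsign : ∀ k < n, |ε k| ≤ 1 := fun k _ => by rcases hε k with h | h <;> simp [h]
  have hvθ : ∀ k ≤ n, |v k| ≤ theta0 α := fun k _ => abs_le.2 (hv k)
  have hv'θ : ∀ k ≤ n, |v' k| ≤ theta0 α := fun k _ => abs_le.2 (hv' k)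
  have hrec'ε : ∀ k < n, v' k = Tmap α (ε k) (v' (k + 1)) := fun k hk => hεε' k hk ▸ hrec' k
  have hd : 0 < distortion α := zero_lt_one.trans_le (one_le_distortion hα)
  refine ⟨?_, prod_abs_le_distortion_mul_prod_abs hα hsign hvθ hv'θ (fun k _ => hrec k) hrec'ε⟩
  rw [one_div_mul_eq_div, div_le_iff₀' hd]
  exact prod_abs_le_distortion_mul_prod_abs hα hsign hv'θ hvθ hrec'ε fun k _ => hrec k
end
end
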